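/- arXiv:1104.0410 — 3 statements merged into one kernel-verified Lean document; each statement's English description precedes it below -/
import Mathlib

section
/- Let m > 1 be an integer, and let k be a finite field containing an element α whose order in the multiplicative group k^× is 2m. Let g be an element of SL₂(k) such that the trace of g equals α + α⁻¹ or −(α + α⁻¹). Then the image [g] of g in PSL₂(k) = SL₂(k)/{±I} has order exactly m. -/
open scoped MatrixGroups
open Polynomial

private lemma ch_two {k : Type} [Field k] (A : Matrix (Fin 2) (Fin 2) k) :
    A * A - Matrix.trace A • A + Matrix.det A • (1 : Matrix (Fin 2) (Fin 2) k) = 0 := by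
  ext i j
  fin_cases i <;> fin_cases j <;>
    simp [Matrix.mul_apply, Fin.sum_univ_two, Matrix.trace_fin_two, Matrix.det_fin_two,
      Matrix.one_apply] <;> ring

/-- If `k` is a finite field containing an element `α` of order `2m` in `kˣ` (`m > 1`),
and `g ∈ SL₂(k)` has trace `±(α + α⁻¹)`, then the image of `g` in `PSL₂(k)` has order
exactly `m`. -/
theorem order_in_psl_of_trace (m : ℕ) (hm : 1 < m) (k : Type) [Field k] [Finite k]
    (α : kˣ) (hα : orderOf α = 2 * m) (g : SL(2, k))
    (hg : Matrix.trace (g : Matrix (Fin 2) (Fin 2) k) = (α : k) + ((α⁻¹ : kˣ) : k) ∨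
          Matrix.trace (g : Matrix (Fin 2) (Fin 2) k) = -((α : k) + ((α⁻¹ : kˣ) : k))) :
    orderOf (QuotientGroup.mk g : PSL(2, k)) = m := by
  set A : Matrix (Fin 2) (Fin 2) k := (g : Matrix (Fin 2) (Fin 2) k) with hA
  obtain ⟨l, u, hmul, hsum, hsq⟩ :
      ∃ l u : k, l * u = 1 ∧ l + u = Matrix.trace A ∧ l ^ 2 = (α : k) ^ 2 := by
    rcases hg with h | h
    · exact ⟨(α : k), ((α⁻¹ : kˣ) : k), Units.mul_inv α, h.symm, rfl⟩
    · exact ⟨-(α : k), -((α⁻¹ : kˣ) : k), by rw [neg_mul_neg]; exact Units.mul_inv α,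
        by rw [h, neg_add], by rw [neg_sq]⟩
  have hαk : ((α : k)) ^ (2 * m) = 1 := by
    have h := pow_orderOf_eq_one α
    rw [hα] at h
    rw [← Units.val_pow_eq_pow_val, h, Units.val_one]
  have hα2 : ((α : k)) ^ 2 ≠ 1 := by
    intro h
    have h1 : (α ^ 2 : kˣ) = 1 := Units.ext (by simpa using h)
    have h2 := orderOf_dvd_of_pow_eq_one h1
    rw [hα] at h2
    have := Nat.le_of_dvd (by norm_num) h2
    omega
  have hl0 : l ≠ 0 := fun h => by simp [h] at hmul
  have hu : u = l⁻¹ := eq_inv_of_mul_eq_one_right hmul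
  have hlu : l ≠ u := by
    intro h
    apply hα2
    rw [h] at hmul
    rw [← hsq, pow_two, h]
    exact hmul
  have hdet : Matrix.det A = 1 := g.property
  have hkey : (Polynomial.aeval A) ((X - C l) * (X - C u)) = 0 := by
    have h := ch_two A
    rw [hdet] at h
    simp only [map_mul, map_sub, aeval_X, aeval_C, Algebra.algebraMap_eq_smul_one]
    calc (A - l • 1) * (A - u • 1)
        = A * A - (l + u) • A + (l * u) • 1 := by
          simp only [sub_mul, mul_sub, smul_mul_assoc, mul_smul_comm, smul_smul,
            one_mul, mul_one, add_smul, smul_sub, smul_mul_smul_comm, mul_comm u l]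
          abel
      _ = 0 := by rw [hsum, hmul, ← h, one_smul]
  have hzero : ∀ q : k[X], (X - C l) * (X - C u) ∣ q → (Polynomial.aeval A) q = 0 := by
    rintro q ⟨c, rfl⟩
    rw [map_mul, hkey, zero_mul]
  have hcop : IsCoprime (X - C l) (X - C u) :=
    isCoprime_X_sub_C_of_isUnit_sub ((sub_ne_zero.mpr hlu).isUnit)
  set ε : k := l ^ m with hε
  have hε2 : ε ^ 2 = 1 := by
    calc ε ^ 2 = (l ^ 2) ^ m := by rw [hε, ← pow_mul, ← pow_mul, mul_comm]
      _ = 1 := by rw [hsq, ← pow_mul, hαk]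
  have hum : u ^ m = ε := by
    rw [hu, inv_pow, ← hε]
    exact inv_eq_of_mul_eq_one_right (by rw [← pow_two]; exact hε2)
  have hdvd : (X - C l) * (X - C u) ∣ (X ^ m - C ε) :=
    hcop.mul_dvd
      ((dvd_iff_isRoot).mpr (by simp [IsRoot, hε]))
      ((dvd_iff_isRoot).mpr (by simp [IsRoot, hum]))
  have hgm : (↑(g ^ m) : Matrix (Fin 2) (Fin 2) k) = ε • 1 := by
    have h0 := hzero _ hdvd
    rw [map_sub, map_pow, aeval_X, aeval_C, Algebra.algebraMap_eq_smul_one,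
      sub_eq_zero] at h0
    rw [Matrix.SpecialLinearGroup.coe_pow]
    exact h0
  have hscalar : ∀ (r : k), (Matrix.scalar (Fin 2)) r = r • (1 : Matrix (Fin 2) (Fin 2) k) := by
    intro r
    rw [Matrix.scalar_apply, Matrix.smul_one_eq_diagonal]
  have hcen : g ^ m ∈ Subgroup.center (SL(2, k)) :=
    Matrix.SpecialLinearGroup.mem_center_iff.mpr
      ⟨ε, by simpa using hε2, by rw [hscalar, hgm]⟩
  have hup : (QuotientGroup.mk g : PSL(2, k)) ^ m = 1 := by
    rw [← QuotientGroup.mk_pow]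
    exact (QuotientGroup.eq_one_iff _).mpr hcen
  set d := orderOf (QuotientGroup.mk g : PSL(2, k)) with hd
  have hdm : d ∣ m := orderOf_dvd_of_pow_eq_one hup
  have hgd : g ^ d ∈ Subgroup.center (SL(2, k)) := by
    rw [← QuotientGroup.eq_one_iff, QuotientGroup.mk_pow]
    exact pow_orderOf_eq_one _
  obtain ⟨r, hr2, hrs⟩ := Matrix.SpecialLinearGroup.mem_center_iff.mp hgd
  have hAd : A ^ d = r • 1 := by
    rw [hA, ← Matrix.SpecialLinearGroup.coe_pow, ← hrs, hscalar]
  have hr2' : r ^ 2 = 1 := by simpa using hr2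
  have hA2d : A ^ (2 * d) = 1 := by
    rw [mul_comm, pow_mul, hAd, _root_.smul_pow, one_pow, hr2', one_smul]
  have h2d0 : (Polynomial.aeval A) ((X ^ (2 * d) - 1 : k[X])) = 0 := by
    rw [map_sub, map_pow, aeval_X, map_one, hA2d, sub_self]
  have hns : ∀ c : k, A ≠ c • 1 := by
    intro c hc
    have htr : Matrix.trace A = c * 2 := by
      rw [hc, Matrix.trace_smul, Matrix.trace_one]
      simp [smul_eq_mul]
    have hdc : c ^ 2 = 1 := by
      have h := hdet
      rw [hc] at h
      simpa [Matrix.det_smul] using h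
    have h1 : l * (l + u) = l * (c * 2) := by rw [hsum, htr]
    rw [mul_add, hmul] at h1
    have hzero2 : (l - c) ^ 2 = 0 := by linear_combination h1 + hdc
    have hlc : l = c := by
      have h2 := pow_eq_zero_iff (n := 2) (by norm_num) |>.mp hzero2
      exact sub_eq_zero.mp h2
    apply hα2
    rw [← hsq, hlc]
    exact hdc
  set p : k[X] := (X - C l) * (X - C u) with hp
  have hpm : p.Monic := (monic_X_sub_C l).mul (monic_X_sub_C u)
  have hdegp : p.degree = 2 := by
    rw [hp, degree_mul, degree_X_sub_C, degree_X_sub_C]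
    rfl
  set q : k[X] := X ^ (2 * d) - 1 with hq
  have haev : (Polynomial.aeval A) (q %ₘ p) = 0 := by
    have h := modByMonic_add_div q p
    have h2 : (Polynomial.aeval A) (q %ₘ p) + (Polynomial.aeval A) p *
        (Polynomial.aeval A) (q /ₘ p) = (Polynomial.aeval A) q := by
      rw [← map_mul, ← map_add, h]
    rw [hp, hkey, zero_mul, add_zero] at h2
    rw [h2, hq]
    exact h2d0
  have hdeg : (q %ₘ p).degree ≤ 1 := by
    have h := degree_modByMonic_lt q hpm
    rw [hdegp] at h
    cases hh : (q %ₘ p).degree with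
    | bot => exact bot_le
    | coe n =>
      rw [hh, (show (2 : WithBot ℕ) = ((2 : ℕ) : WithBot ℕ) from rfl)] at h
      have hn1 : n ≤ 1 := Nat.lt_succ_iff.mp (WithBot.coe_lt_coe.mp h)
      rw [show (1 : WithBot ℕ) = ((1 : ℕ) : WithBot ℕ) from rfl]
      exact WithBot.coe_le_coe.mpr hn1
  have hform := eq_X_add_C_of_degree_le_one hdeg
  rw [hform, map_add, map_mul, aeval_C, aeval_X, aeval_C,
    Algebra.algebraMap_eq_smul_one, smul_mul_assoc, one_mul,
    Algebra.algebraMap_eq_smul_one] at haev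
  have ha0 : (q %ₘ p).coeff 1 = 0 := by
    by_contra hne
    apply hns ((-(q %ₘ p).coeff 0) / ((q %ₘ p).coeff 1))
    have h3 : (q %ₘ p).coeff 1 • A = -((q %ₘ p).coeff 0 • (1 : Matrix (Fin 2) (Fin 2) k)) :=
      eq_neg_of_add_eq_zero_left haev
    calc A = ((q %ₘ p).coeff 1)⁻¹ • ((q %ₘ p).coeff 1 • A) := by
          rw [smul_smul, inv_mul_cancel₀ hne, one_smul]
      _ = ((q %ₘ p).coeff 1)⁻¹ • (-((q %ₘ p).coeff 0 • (1 : Matrix (Fin 2) (Fin 2) k))) := by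
          rw [h3]
      _ = (-(q %ₘ p).coeff 0 / (q %ₘ p).coeff 1) • 1 := by
          rw [← neg_smul, smul_smul, div_eq_inv_mul]
  have hb0 : (q %ₘ p).coeff 0 = 0 := by
    rw [ha0, zero_smul, zero_add] at haev
    have h4 := congrFun (congrFun haev 0) 0
    simpa using h4
  have hr0 : q %ₘ p = 0 := by rw [hform, ha0, hb0]; simp
  have hpdvd : p ∣ q := (modByMonic_eq_zero_iff_dvd hpm).mp hr0
  have hroot : l ^ (2 * d) = 1 := by
    have h1 : (X - C l) ∣ q := dvd_trans (dvd_mul_right _ _) (hp ▸ hpdvd)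
    have h2 := (dvd_iff_isRoot).mp h1
    rw [hq] at h2
    simpa [IsRoot, sub_eq_zero] using h2
  have hα2d : ((α : k)) ^ (2 * d) = 1 := by
    calc ((α : k)) ^ (2 * d) = (((α : k)) ^ 2) ^ d := by rw [← pow_mul]
      _ = (l ^ 2) ^ d := by rw [hsq]
      _ = l ^ (2 * d) := by rw [← pow_mul]
      _ = 1 := hroot
  have hdvd2 : orderOf α ∣ 2 * d := orderOf_dvd_of_pow_eq_one (Units.ext (by simpa using hα2d))
  rw [hα] at hdvd2
  have hmd : m ∣ d := (Nat.mul_dvd_mul_iff_left (by norm_num : 0 < 2)).mp hdvd2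
  exact Nat.dvd_antisymm hdm hmd
end

section
/- Let F be an algebraically closed subfield of ℂ, let N be a positive integer, and let V ⊆ ℂ^N be the common zero set of a collection of polynomials in F[X₁, …, X_N]. Then V ∩ F^N is a dense subset of V with respect to the classical (Euclidean) topology that V inherits as a subspace of ℂ^N. -/
set_option synthInstance.maxHeartbeats 1000000
set_option maxHeartbeats 2000000

open Polynomial

noncomputable section

namespace DenseAux

/-! ### Two-variable polynomial evaluation -/

/-- Evaluation of `K[T][Y]` at `(s, b)` in `ℂ`. -/
def e2 (K : Subfield ℂ) (s b : ℂ) : Polynomial (Polynomial K) →+* ℂ :=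
  Polynomial.eval₂RingHom ((Polynomial.aeval s).toRingHom : Polynomial K →+* ℂ) b

lemma e2_apply (K : Subfield ℂ) (s b : ℂ) (P : Polynomial (Polynomial K)) :
    e2 K s b P = Polynomial.eval₂ ((Polynomial.aeval s).toRingHom : Polynomial K →+* ℂ) b P := rfl

lemma e2_CC (K : Subfield ℂ) (s b : ℂ) (c : K) : e2 K s b (C (C c)) = (c : ℂ) := by
  simp [e2]; rfl

lemma e2_CX (K : Subfield ℂ) (s b : ℂ) : e2 K s b (C X) = s := by simp [e2]

lemma e2_X (K : Subfield ℂ) (s b : ℂ) : e2 K s b X = b := by simp [e2]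

lemma e2_C (K : Subfield ℂ) (s b : ℂ) (c : Polynomial K) :
    e2 K s b (C c) = Polynomial.aeval s c := by
  simp [e2]

lemma e2_continuous (K : Subfield ℂ) (P : Polynomial (Polynomial K)) :
    Continuous fun z : ℂ × ℂ => e2 K z.1 z.2 P := by
  have h : ∀ z : ℂ × ℂ, e2 K z.1 z.2 P =
      ∑ i ∈ Finset.range (P.natDegree + 1), (Polynomial.aeval z.1 (P.coeff i)) * z.2 ^ i := by
    intro z
    rw [e2_apply, Polynomial.eval₂_eq_sum_range]
    rfl
  simp only [h]
  apply continuous_finset_sum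
  intro i _
  exact ((Polynomial.continuous_aeval (P.coeff i)).comp continuous_fst).mul
    ((continuous_pow i).comp continuous_snd)

/-! ### Generic subfield lemmas -/

lemma isAlgebraic_mono {K₁ K₂ : Subfield ℂ} (h : K₁ ≤ K₂) {z : ℂ}
    (hz : IsAlgebraic K₁ z) : IsAlgebraic K₂ z := by
  obtain ⟨p, hp0, hpz⟩ := hz
  have hinj : Function.Injective (Subfield.inclusion h) := fun a b hab =>
    Subtype.ext (congrArg Subtype.val hab : ((Subfield.inclusion h) a : ℂ) = _)
  refine ⟨p.map (Subfield.inclusion h), ?_, ?_⟩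
  · intro hc
    exact hp0 (Polynomial.map_injective _ hinj (by simpa using hc))
  · rw [Polynomial.aeval_def, Polynomial.eval₂_map]
    rw [Polynomial.aeval_def] at hpz
    exact hpz

lemma mem_of_isAlgebraic (F : Subfield ℂ) (hF : IsAlgClosed F) {z : ℂ}
    (hz : IsAlgebraic F z) : z ∈ F := by
  haveI := hF
  have hzi : IsIntegral F z := isAlgebraic_iff_isIntegral.mp hz
  have hirr := minpoly.irreducible hzi
  have hdeg := IsAlgClosed.degree_eq_one_of_irreducible F hirr
  obtain ⟨c, hc⟩ := minpoly.degree_eq_one_iff.mp hdeg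
  exact hc ▸ c.2

/-- Subfield of elements of `ℂ` integral over `K`. -/
def algSub (K : Subfield ℂ) : Subfield ℂ where
  carrier := {z | IsIntegral K z}
  mul_mem' := IsIntegral.mul
  one_mem' := isIntegral_one
  add_mem' := IsIntegral.add
  zero_mem' := isIntegral_zero
  neg_mem' := IsIntegral.neg
  inv_mem' := fun _ h => h.inv

lemma mem_algSub {K : Subfield ℂ} {z : ℂ} : z ∈ algSub K ↔ IsIntegral K z := Iff.rfl

/-- Towers: if every element of `K₁` is integral over `K₀ ≤ K₁`, then anything algebraic
over `K₁` is integral over `K₀`. -/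
lemma isIntegral_of_tower {K₀ K₁ : Subfield ℂ} (hle : K₀ ≤ K₁)
    (hint : ∀ w : K₁, IsIntegral K₀ (w : ℂ)) {z : ℂ}
    (hz : IsAlgebraic K₁ z) : IsIntegral K₀ z := by
  letI : Algebra K₀ K₁ := (Subfield.inclusion hle).toAlgebra
  haveI : IsScalarTower K₀ K₁ ℂ := IsScalarTower.of_algebraMap_eq (fun x => rfl)
  haveI : Algebra.IsIntegral K₀ K₁ := by
    constructor
    intro w
    obtain ⟨p, hmonic, hp⟩ := hint w
    refine ⟨p, hmonic, ?_⟩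
    have : algebraMap K₁ ℂ (Polynomial.aeval w p) = 0 := by
      rw [← Polynomial.aeval_algebraMap_apply]
      exact hp
    exact (map_eq_zero_iff _ (algebraMap K₁ ℂ).injective).mp this
  exact isIntegral_trans z (isAlgebraic_iff_isIntegral.mp hz)

/-! ### Density of an algebraically closed subfield -/

lemma i_mem (F : Subfield ℂ) (hF : IsAlgClosed F) : Complex.I ∈ F := by
  haveI := hF
  have h2 : ((X ^ 2 + 1 : Polynomial F)).degree ≠ 0 := by
    have : ((X ^ 2 + 1 : Polynomial F)) = X ^ 2 + C 1 := by simp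
    rw [this, Polynomial.degree_X_pow_add_C (by norm_num : 0 < 2)]
    norm_num
  obtain ⟨r, hr⟩ := IsAlgClosed.exists_root (X ^ 2 + 1 : Polynomial F) h2
  have hr2 : (r : ℂ) ^ 2 + 1 = 0 := by
    have := congrArg (algebraMap F ℂ) (by simpa [Polynomial.IsRoot, Polynomial.eval_add] using hr)
    push_cast at this
    exact this
  have : ((r : ℂ) - Complex.I) * ((r : ℂ) + Complex.I) = 0 := by
    ring_nf
    rw [Complex.I_sq] at *
    linear_combination hr2
  rcases mul_eq_zero.mp this with h | h
  · have : Complex.I = (r : ℂ) := by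
      have := sub_eq_zero.mp h; linear_combination -this
    exact this ▸ r.2
  · have : Complex.I = -(r : ℂ) := by linear_combination h
    exact this ▸ (F.neg_mem r.2)

lemma dense_subfield (F : Subfield ℂ) (hF : IsAlgClosed F) : Dense (F : Set ℂ) := by
  have hI := i_mem F hF
  rw [Metric.dense_iff]
  intro z ε hε
  obtain ⟨a, ha⟩ := exists_rat_near z.re (by positivity : (0:ℝ) < ε / 2)
  obtain ⟨b, hb⟩ := exists_rat_near z.im (by positivity : (0:ℝ) < ε / 2)
  refine ⟨(a : ℂ) + (b : ℂ) * Complex.I, Metric.mem_ball.mpr ?_, ?_⟩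
  · rw [dist_comm, Complex.dist_eq]
    have h1 : (z - ((a : ℂ) + (b : ℂ) * Complex.I)).re = z.re - a := by simp
    have h2 : (z - ((a : ℂ) + (b : ℂ) * Complex.I)).im = z.im - b := by simp
    calc ‖z - ((a : ℂ) + (b : ℂ) * Complex.I)‖
        ≤ |(z - ((a : ℂ) + (b : ℂ) * Complex.I)).re| + |(z - ((a : ℂ) + (b : ℂ) * Complex.I)).im| :=
          Complex.norm_le_abs_re_add_abs_im _
      _ < ε := by rw [h1, h2]; have := abs_sub_comm z.re (a:ℝ); linarith [abs_sub_comm (a:ℝ) z.re, ha, hb]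
  · exact Subfield.add_mem _ (SubfieldClass.ratCast_mem F a)
      (Subfield.mul_mem _ (SubfieldClass.ratCast_mem F b) hI)

/-! ### Root proximity -/

lemma prod_ge_pow (ε : ℝ) (hε : 0 ≤ ε) (M : Multiset ℝ) (h : ∀ r ∈ M, ε ≤ r) :
    ε ^ Multiset.card M ≤ M.prod := by
  induction M using Multiset.induction with
  | empty => simp
  | cons a M ih =>
    simp only [Multiset.prod_cons, Multiset.card_cons, pow_succ]
    have ha := h a (Multiset.mem_cons_self a M)
    have hM := ih (fun r hr => h r (Multiset.mem_cons_of_mem hr))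
    calc ε ^ Multiset.card M * ε ≤ M.prod * a := by
          apply mul_le_mul hM ha hε
          exact Multiset.prod_nonneg (fun r hr =>
            le_trans hε (h r (Multiset.mem_cons_of_mem hr)))
      _ = a * M.prod := mul_comm _ _

lemma exists_root_near (u : Polynomial ℂ) (hu : u.Monic)
    (w : ℂ) (ε : ℝ) (hε : 0 < ε) (h : ‖u.eval w‖ < ε ^ u.natDegree) :
    ∃ b : ℂ, u.IsRoot b ∧ dist b w < ε := by
  have hsplit : u = (Multiset.map (fun a => X - C a) u.roots).prod :=
    (IsAlgClosed.splits u).eq_prod_roots_of_monic hu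
  by_contra hcon
  push_neg at hcon
  have hcard : Multiset.card u.roots = u.natDegree := by
    have := (IsAlgClosed.splits u).natDegree_eq_card_roots
    simpa using this.symm
  have heval : ‖u.eval w‖ = (Multiset.map (fun a => ‖w - a‖) u.roots).prod := by
    conv_lhs => rw [hsplit]
    rw [Polynomial.eval_multiset_prod, Multiset.map_map, show ∀ m : Multiset ℂ, ‖m.prod‖ = (m.map (‖·‖)).prod from fun m => map_multiset_prod normHom m,
      Multiset.map_map]
    congr 1
    apply Multiset.map_congr rfl
    intro a _
    simp
  have hge : ε ^ u.natDegree ≤ ‖u.eval w‖ := by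
    rw [heval, ← hcard, ← Multiset.card_map (fun a => ‖w - a‖) u.roots]
    apply prod_ge_pow ε (le_of_lt hε)
    intro r hr
    obtain ⟨a, ha, rfl⟩ := Multiset.mem_map.mp hr
    have haroot : u.IsRoot a := by
      rw [Polynomial.IsRoot, hsplit, Polynomial.eval_multiset_prod]
      apply Multiset.prod_eq_zero
      rw [Multiset.map_map, Multiset.mem_map]
      exact ⟨a, ha, by simp⟩
    have := hcon a haroot
    rw [Complex.dist_eq] at this
    calc ε ≤ ‖a - w‖ := this
      _ = ‖w - a‖ := by rw [← neg_sub]; exact norm_neg _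
  linarith

/-! ### Representation subfields -/

/-- The subfield of values representable as ratios of two-variable polynomial
expressions at `(t, θ)`. -/
def repSet (K : Subfield ℂ) (t θ : ℂ) : Subfield ℂ where
  carrier := {z : ℂ | ∃ A B : Polynomial (Polynomial K),
    e2 K t θ B ≠ 0 ∧ z * e2 K t θ B = e2 K t θ A}
  mul_mem' := by
    rintro x y ⟨A₁, B₁, hB₁, hA₁⟩ ⟨A₂, B₂, hB₂, hA₂⟩
    refine ⟨A₁ * A₂, B₁ * B₂, by simp [mul_ne_zero hB₁ hB₂], ?_⟩
    simp only [map_mul]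
    calc x * y * (e2 K t θ B₁ * e2 K t θ B₂) = (x * e2 K t θ B₁) * (y * e2 K t θ B₂) := by ring
      _ = e2 K t θ A₁ * e2 K t θ A₂ := by rw [hA₁, hA₂]
  one_mem' := ⟨1, 1, by simp, by simp⟩
  add_mem' := by
    rintro x y ⟨A₁, B₁, hB₁, hA₁⟩ ⟨A₂, B₂, hB₂, hA₂⟩
    refine ⟨A₁ * B₂ + A₂ * B₁, B₁ * B₂, by simp [mul_ne_zero hB₁ hB₂], ?_⟩
    simp only [map_mul, map_add]
    calc (x + y) * (e2 K t θ B₁ * e2 K t θ B₂)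
        = (x * e2 K t θ B₁) * e2 K t θ B₂ + (y * e2 K t θ B₂) * e2 K t θ B₁ := by ring
      _ = e2 K t θ A₁ * e2 K t θ B₂ + e2 K t θ A₂ * e2 K t θ B₁ := by rw [hA₁, hA₂]
  zero_mem' := ⟨0, 1, by simp, by simp⟩
  neg_mem' := by
    rintro x ⟨A, B, hB, hA⟩
    exact ⟨-A, B, hB, by rw [map_neg, neg_mul, hA]⟩
  inv_mem' := by
    rintro x ⟨A, B, hB, hA⟩
    by_cases hx : x = 0
    · exact ⟨0, 1, by simp, by simp [hx]⟩
    · have hAne : e2 K t θ A ≠ 0 := by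
        rw [← hA]; exact mul_ne_zero hx hB
      refine ⟨B, A, hAne, ?_⟩
      rw [← hA]
      field_simp

lemma mem_repSet_of_closure (K : Subfield ℂ) (t θ : ℂ) {z : ℂ}
    (hz : z ∈ Subfield.closure ((K : Set ℂ) ∪ {t, θ})) :
    ∃ A B : Polynomial (Polynomial K), e2 K t θ B ≠ 0 ∧ z * e2 K t θ B = e2 K t θ A := by
  have : Subfield.closure ((K : Set ℂ) ∪ {t, θ}) ≤ repSet K t θ := by
    rw [Subfield.closure_le]
    rintro w (hw | hw | hw)
    · exact ⟨C (C ⟨w, hw⟩), 1, by simp, by simp [e2_CC]⟩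
    · exact ⟨C X, 1, by simp, by simp [hw, e2_CX]⟩
    · simp only [Set.mem_singleton_iff] at hw
      exact ⟨X, 1, by simp, by simp [hw, e2_X]⟩
  exact this hz

/-- One-variable representation: elements of `K(t)` as ratios of polynomials in `t`. -/
def repSet1 (K : Subfield ℂ) (t : ℂ) : Subfield ℂ where
  carrier := {z : ℂ | ∃ n d : Polynomial K,
    Polynomial.aeval t d ≠ 0 ∧ z * Polynomial.aeval t d = Polynomial.aeval t n}
  mul_mem' := by
    rintro x y ⟨A₁, B₁, hB₁, hA₁⟩ ⟨A₂, B₂, hB₂, hA₂⟩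
    refine ⟨A₁ * A₂, B₁ * B₂, by simp [mul_ne_zero hB₁ hB₂], ?_⟩
    simp only [map_mul]
    calc x * y * (aeval t B₁ * aeval t B₂) = (x * aeval t B₁) * (y * aeval t B₂) := by ring
      _ = aeval t A₁ * aeval t A₂ := by rw [hA₁, hA₂]
  one_mem' := ⟨1, 1, by simp, by simp⟩
  add_mem' := by
    rintro x y ⟨A₁, B₁, hB₁, hA₁⟩ ⟨A₂, B₂, hB₂, hA₂⟩
    refine ⟨A₁ * B₂ + A₂ * B₁, B₁ * B₂, by simp [mul_ne_zero hB₁ hB₂], ?_⟩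
    simp only [map_mul, map_add]
    calc (x + y) * (aeval t B₁ * aeval t B₂)
        = (x * aeval t B₁) * aeval t B₂ + (y * aeval t B₂) * aeval t B₁ := by ring
      _ = aeval t A₁ * aeval t B₂ + aeval t A₂ * aeval t B₁ := by rw [hA₁, hA₂]
  zero_mem' := ⟨0, 1, by simp, by simp⟩
  neg_mem' := by
    rintro x ⟨A, B, hB, hA⟩
    exact ⟨-A, B, hB, by rw [map_neg, neg_mul, hA]⟩
  inv_mem' := by
    rintro x ⟨A, B, hB, hA⟩
    by_cases hx : x = 0
    · exact ⟨0, 1, by simp, by simp [hx]⟩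
    · have hAne : aeval t A ≠ 0 := by
        rw [← hA]; exact mul_ne_zero hx hB
      refine ⟨B, A, hAne, ?_⟩
      rw [← hA]
      field_simp

lemma mem_repSet1_of_closure (K : Subfield ℂ) (t : ℂ) {z : ℂ}
    (hz : z ∈ Subfield.closure ((K : Set ℂ) ∪ {t})) :
    ∃ n d : Polynomial K, Polynomial.aeval t d ≠ 0 ∧
      z * Polynomial.aeval t d = Polynomial.aeval t n := by
  have : Subfield.closure ((K : Set ℂ) ∪ {t}) ≤ repSet1 K t := by
    rw [Subfield.closure_le]
    rintro w (hw | hw)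
    · exact ⟨C ⟨w, hw⟩, 1, by simp, by simp; rfl⟩
    · simp only [Set.mem_singleton_iff] at hw
      exact ⟨X, 1, by simp, by simp [hw]⟩
  exact this hz

/-! ### The specialization map and lifting -/

lemma aeval_mem_closure (K : Subfield ℂ) (t : ℂ) (P : Polynomial K) :
    Polynomial.aeval t P ∈ Subfield.closure ((K : Set ℂ) ∪ {t}) := by
  induction P using Polynomial.induction_on' with
  | add p q hp hq => rw [map_add]; exact Subfield.add_mem _ hp hq
  | monomial n a =>
    rw [Polynomial.aeval_monomial]
    have ha : (algebraMap (↥K) ℂ) a ∈ Subfield.closure ((K : Set ℂ) ∪ {t}) :=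
      Subfield.subset_closure (Or.inl a.2)
    have htt : t ∈ Subfield.closure ((K : Set ℂ) ∪ {t}) :=
      Subfield.subset_closure (Or.inr (Set.mem_singleton t))
    exact Subfield.mul_mem _ ha (Subfield.pow_mem _ htt n)

/-- The specialization map `K[T] → K(t)`. -/
def evtL (K : Subfield ℂ) (t : ℂ) :
    Polynomial K →+* (Subfield.closure ((K : Set ℂ) ∪ {t})) :=
  RingHom.codRestrict ((Polynomial.aeval t).toRingHom : Polynomial K →+* ℂ)
    (Subfield.closure ((K : Set ℂ) ∪ {t})) (aeval_mem_closure K t)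

lemma evtL_val (K : Subfield ℂ) (t : ℂ) (P : Polynomial K) :
    (evtL K t P : ℂ) = Polynomial.aeval t P := rfl

lemma evtL_injective (K : Subfield ℂ) (t : ℂ) (ht : Transcendental K t) :
    Function.Injective (evtL K t) := by
  intro p q hpq
  have h : Polynomial.aeval t (p - q) = 0 := by
    rw [map_sub, sub_eq_zero]
    exact congrArg Subtype.val hpq
  have := (transcendental_iff.mp ht) _ h
  exact sub_eq_zero.mp this

lemma aeval_map_evtL (K : Subfield ℂ) (t θ : ℂ) (Q : Polynomial (Polynomial K)) :
    Polynomial.aeval θ (Q.map (evtL K t)) = e2 K t θ Q := by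
  rw [Polynomial.aeval_def, Polynomial.eval₂_map]
  rfl

lemma lemLift (K : Subfield ℂ) (t : ℂ)
    (h' : Polynomial (Subfield.closure ((K : Set ℂ) ∪ {t}))) :
    ∃ (H : Polynomial (Polynomial K)) (D : Polynomial K),
      Polynomial.aeval t D ≠ 0 ∧ H.map (evtL K t) = C (evtL K t D) * h' := by
  induction h' using Polynomial.induction_on' with
  | add p q hp hq =>
    obtain ⟨Hp, Dp, hDp, hHp⟩ := hp
    obtain ⟨Hq, Dq, hDq, hHq⟩ := hq
    refine ⟨C Dq * Hp + C Dp * Hq, Dp * Dq, by simp [mul_ne_zero hDp hDq], ?_⟩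
    rw [Polynomial.map_add, Polynomial.map_mul, Polynomial.map_mul, hHp, hHq]
    simp only [Polynomial.map_C, map_mul]
    ring
  | monomial n z =>
    obtain ⟨n₀, d, hd, hnd⟩ := mem_repSet1_of_closure K t z.2
    refine ⟨Polynomial.monomial n n₀, d, hd, ?_⟩
    rw [Polynomial.map_monomial]
    have hz : evtL K t n₀ = evtL K t d * z := by
      apply Subtype.ext
      rw [evtL_val]
      push_cast
      rw [← hnd, evtL_val]
      ring
    rw [hz, C_mul_monomial]

lemma minpoly_lift (K : Subfield ℂ) (t θ : ℂ) (ht : Transcendental K t)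
    (hθ : IsIntegral (Subfield.closure ((K : Set ℂ) ∪ {t})) θ) :
    ∃ Mμ : Polynomial (Polynomial K),
      Polynomial.aeval t (Mμ.leadingCoeff) ≠ 0 ∧
      0 < Mμ.natDegree ∧
      e2 K t θ Mμ = 0 ∧
      ∀ q : Polynomial (Polynomial K), e2 K t θ q = 0 →
        ∃ (D : Polynomial K) (G : Polynomial (Polynomial K)),
          Polynomial.aeval t D ≠ 0 ∧ C D * q = Mμ * G := by
  set L := Subfield.closure ((K : Set ℂ) ∪ {t}) with hL
  have hinj := evtL_injective K t ht
  set μ := minpoly L θ with hμdef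
  obtain ⟨Mμ, Dμ, hDμ, hMμ⟩ := lemLift K t μ
  have hDμ' : evtL K t Dμ ≠ 0 := by
    intro h
    apply hDμ
    rw [← evtL_val, h]
    rfl
  have hmonic : μ.Monic := minpoly.monic hθ
  refine ⟨Mμ, ?_, ?_, ?_, ?_⟩
  · have h1 : (Mμ.map (evtL K t)).leadingCoeff = evtL K t Mμ.leadingCoeff :=
      Polynomial.leadingCoeff_map_of_injective hinj Mμ
    have h2 : (C (evtL K t Dμ) * μ).leadingCoeff = evtL K t Dμ := by
      rw [Polynomial.leadingCoeff_mul, Polynomial.leadingCoeff_C, hmonic.leadingCoeff, mul_one]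
    intro h
    apply hDμ'
    rw [← h2, ← hMμ, h1]
    apply Subtype.ext
    rw [evtL_val, h]
    rfl
  · have h1 : (Mμ.map (evtL K t)).natDegree = Mμ.natDegree :=
      Polynomial.natDegree_map_eq_of_injective hinj Mμ
    have h2 : (C (evtL K t Dμ) * μ).natDegree = μ.natDegree := by
      rw [Polynomial.natDegree_C_mul hDμ']
    have h3 := minpoly.natDegree_pos hθ
    rw [hMμ, h2] at h1
    exact h1 ▸ minpoly.natDegree_pos hθ
  · rw [← aeval_map_evtL, hMμ, map_mul, Polynomial.aeval_C, minpoly.aeval, mul_zero]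
  · intro q hq
    have hq' : Polynomial.aeval θ (q.map (evtL K t)) = 0 := by
      rw [aeval_map_evtL]; exact hq
    obtain ⟨g, hg⟩ := minpoly.dvd L θ hq'
    obtain ⟨Hg, Dg, hDg, hHg⟩ := lemLift K t g
    refine ⟨Dμ * Dg, Hg, by simp [mul_ne_zero hDμ hDg], ?_⟩
    apply Polynomial.map_injective _ hinj
    rw [Polynomial.map_mul, Polynomial.map_mul, Polynomial.map_C, map_mul, hMμ, hHg, hg, C_mul]
    ring

lemma finsupp_le_total {N : ℕ} {F : Subfield ℂ} (p : MvPolynomial (Fin N) F)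
    (α : Fin N →₀ ℕ) (hα : α ∈ p.support) (i : Fin N) : α i ≤ p.totalDegree := by
  refine le_trans ?_ (MvPolynomial.le_totalDegree hα)
  by_cases h : α i = 0
  · simp [h]
  · have hi : i ∈ α.support := Finsupp.mem_support_iff.mpr h
    exact Finset.single_le_sum (f := fun j => α j) (fun j _ => Nat.zero_le _) hi

/-- Clearing denominators of a multivariate polynomial substituted with ratios. -/
def clearPoly {N : ℕ} {F K : Subfield ℂ} (hFK : F ≤ K) (p : MvPolynomial (Fin N) F)
    (A B : Fin N → Polynomial (Polynomial K)) : Polynomial (Polynomial K) :=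
  p.support.sum (fun α => C (C (Subfield.inclusion hFK (MvPolynomial.coeff α p))) *
    ∏ i, (A i) ^ (α i) * (B i) ^ (p.totalDegree - α i))

lemma clearPoly_eval {N : ℕ} {F K : Subfield ℂ} (hFK : F ≤ K) (p : MvPolynomial (Fin N) F)
    (A B : Fin N → Polynomial (Polynomial K)) (s b : ℂ)
    (hB : ∀ i, e2 K s b (B i) ≠ 0) :
    e2 K s b (clearPoly hFK p A B) =
      (∏ i, e2 K s b (B i)) ^ p.totalDegree *
        MvPolynomial.aeval (fun i => e2 K s b (A i) / e2 K s b (B i)) p := by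
  set y : Fin N → ℂ := fun i => e2 K s b (A i) / e2 K s b (B i) with hy
  have hAy : ∀ i, e2 K s b (A i) = y i * e2 K s b (B i) := by
    intro i
    rw [hy]
    rw [div_mul_cancel₀ _ (hB i)]
  rw [clearPoly, map_sum]
  have haev : MvPolynomial.aeval y p =
      ∑ α ∈ p.support, algebraMap F ℂ (MvPolynomial.coeff α p) * ∏ i, y i ^ α i := by
    rw [MvPolynomial.aeval_def, MvPolynomial.eval₂_eq']
  rw [haev, Finset.mul_sum]
  apply Finset.sum_congr rfl
  intro α hα
  rw [map_mul, e2_CC, map_prod]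
  have hcoe : ((Subfield.inclusion hFK (MvPolynomial.coeff α p) : K) : ℂ)
      = algebraMap F ℂ (MvPolynomial.coeff α p) := rfl
  rw [hcoe]
  rw [← mul_assoc, mul_comm ((∏ i, e2 K s b (B i)) ^ p.totalDegree) _, mul_assoc]
  congr 1
  rw [← Finset.prod_pow]
  rw [← Finset.prod_mul_distrib]
  apply Finset.prod_congr rfl
  intro i _
  rw [map_mul, map_pow, map_pow, hAy i]
  rw [mul_pow, mul_assoc, ← pow_add]
  have hle := finsupp_le_total p α hα i
  have hexp : α i + (p.totalDegree - α i) = p.totalDegree := by omega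
  rw [hexp, mul_comm]

lemma kernel_gen {N : ℕ} (F : Subfield ℂ) (x : Fin N → ℂ) :
    ∃ gens : Finset (MvPolynomial (Fin N) F),
      (∀ g ∈ gens, MvPolynomial.aeval x g = 0) ∧
      ∀ (y : Fin N → ℂ), (∀ g ∈ gens, MvPolynomial.aeval y g = 0) →
        ∀ p : MvPolynomial (Fin N) F, MvPolynomial.aeval x p = 0 → MvPolynomial.aeval y p = 0 := by
  set I : Ideal (MvPolynomial (Fin N) F) :=
    RingHom.ker ((MvPolynomial.aeval x : MvPolynomial (Fin N) F →ₐ[F] ℂ) : MvPolynomial (Fin N) F →+* ℂ)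
    with hI
  have hFG : I.FG := IsNoetherian.noetherian I
  obtain ⟨s, hs⟩ := hFG
  refine ⟨s, ?_, ?_⟩
  · intro g hg
    have : g ∈ I := hs ▸ Ideal.subset_span hg
    exact this
  · intro y hy p hp
    have hpI : p ∈ I := hp
    rw [← hs] at hpI
    refine Submodule.span_induction ?_ ?_ ?_ ?_ hpI
    · intro g hg
      exact hy g hg
    · simp
    · intro a b _ _ ha hb
      rw [map_add, ha, hb, add_zero]
    · intro r a _ ha
      rw [smul_eq_mul, map_mul, ha, mul_zero]

lemma aeval_mem_subfield {K : Subfield ℂ} {s : ℂ} (hs : s ∈ K) (c : Polynomial K) :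
    Polynomial.aeval s c ∈ K := by
  induction c using Polynomial.induction_on' with
  | add p q hp hq => rw [map_add]; exact K.add_mem hp hq
  | monomial n a =>
    rw [Polynomial.aeval_monomial]
    exact K.mul_mem a.2 (K.pow_mem hs n)

lemma e2_mem_closure {K : Subfield ℂ} {s β : ℂ} (hs : s ∈ K)
    (P : Polynomial (Polynomial K)) :
    e2 K s β P ∈ Subfield.closure ((K : Set ℂ) ∪ {β}) := by
  induction P using Polynomial.induction_on' with
  | add p q hp hq => rw [map_add]; exact Subfield.add_mem _ hp hq
  | monomial n a =>
    rw [e2_apply, Polynomial.eval₂_monomial]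
    have h1 : Polynomial.aeval s a ∈ Subfield.closure ((K : Set ℂ) ∪ {β}) :=
      Subfield.subset_closure (Or.inl (aeval_mem_subfield hs a))
    have h2 : β ∈ Subfield.closure ((K : Set ℂ) ∪ {β}) :=
      Subfield.subset_closure (Or.inr (Set.mem_singleton β))
    exact Subfield.mul_mem _ h1 (Subfield.pow_mem _ h2 n)


/-- The key specialization step. -/
lemma spec_step {N : ℕ} (F K₀ : Subfield ℂ) (hF : IsAlgClosed F) (hFK : F ≤ K₀)
    (x : Fin N → ℂ) (t : ℂ) (ht : Transcendental K₀ t)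
    (hxt : ∀ i, IsAlgebraic (Subfield.closure ((K₀ : Set ℂ) ∪ {t})) (x i))
    (ε : ℝ) (hε : 0 < ε) :
    ∃ y : Fin N → ℂ,
      (∀ i, IsAlgebraic K₀ (y i)) ∧
      (∀ i, x i ∈ K₀ → y i = x i) ∧
      (∀ p : MvPolynomial (Fin N) F, MvPolynomial.aeval x p = 0 → MvPolynomial.aeval y p = 0) ∧
      (∀ i, dist (y i) (x i) < ε) := by
  classical
  set L : Subfield ℂ := Subfield.closure ((K₀ : Set ℂ) ∪ {t}) with hLdef
  -- the primitive element θ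
  have hxint : ∀ i, IsIntegral L (x i) := fun i => isAlgebraic_iff_isIntegral.mp (hxt i)
  haveI : Finite ↑(Set.range x) := Set.finite_range x
  haveI hfd : FiniteDimensional L (IntermediateField.adjoin L (Set.range x)) :=
    IntermediateField.finiteDimensional_adjoin (fun z hz => by
      obtain ⟨i, rfl⟩ := hz
      exact hxint i)
  obtain ⟨θ', hθ'⟩ := Field.exists_primitive_element L (IntermediateField.adjoin L (Set.range x))
  set θ : ℂ := (θ' : ℂ) with hθdef
  have hθint : IsIntegral L θ := by
    have h1 : IsIntegral L θ' := IsIntegral.of_finite L θ'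
    exact h1.map (IntermediateField.adjoin L (Set.range x)).val
  -- x i lies in the subfield generated by K₀, t, θ
  have hxrep : ∀ i, x i ∈ Subfield.closure ((K₀ : Set ℂ) ∪ {t, θ}) := by
    intro i
    have hxiE : x i ∈ IntermediateField.adjoin L (Set.range x) :=
      IntermediateField.subset_adjoin _ _ ⟨i, rfl⟩
    have hmem : (⟨x i, hxiE⟩ : IntermediateField.adjoin L (Set.range x)) ∈
        (IntermediateField.adjoin L {θ'} : IntermediateField L (IntermediateField.adjoin L (Set.range x))) := by
      rw [hθ']; trivial
    have hmap : x i ∈ IntermediateField.map (IntermediateField.adjoin L (Set.range x)).val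
        (IntermediateField.adjoin L {θ'}) := ⟨_, hmem, rfl⟩
    rw [IntermediateField.adjoin_map] at hmap
    have himg : ((IntermediateField.adjoin L (Set.range x)).val '' {θ'}) = {θ} := by
      simp [hθdef]
    rw [himg] at hmap
    -- now reduce adjoin over L to subfield closure
    have hLsub : ∀ c : L, algebraMap L ℂ c ∈ Subfield.closure ((K₀ : Set ℂ) ∪ {t, θ}) := by
      intro c
      have : (c : ℂ) ∈ Subfield.closure ((K₀ : Set ℂ) ∪ {t}) := c.2
      have hmono : Subfield.closure ((K₀ : Set ℂ) ∪ {t}) ≤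
          Subfield.closure ((K₀ : Set ℂ) ∪ {t, θ}) := by
        apply Subfield.closure_le.mpr
        intro w hw
        rcases hw with hw | hw
        · exact Subfield.subset_closure (Or.inl hw)
        · exact Subfield.subset_closure (Or.inr (Or.inl hw))
      exact hmono this
    set M : IntermediateField L ℂ := Subfield.toIntermediateField
      (Subfield.closure ((K₀ : Set ℂ) ∪ {t, θ})) hLsub with hM
    have hadj : IntermediateField.adjoin L {θ} ≤ M := by
      apply IntermediateField.adjoin_le_iff.mpr
      intro w hw
      rcases hw with rfl
      exact Subfield.subset_closure (Or.inr (Or.inr rfl))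
    exact hadj hmap
  -- representations x i = A i / B i  at (t, θ), constant when x i ∈ K₀
  have hreps : ∀ i, ∃ A B : Polynomial (Polynomial K₀),
      e2 K₀ t θ B ≠ 0 ∧ x i * e2 K₀ t θ B = e2 K₀ t θ A :=
    fun i => mem_repSet_of_closure K₀ t θ (hxrep i)
  choose A₀ B₀ hB₀ hAB₀ using hreps
  set A : Fin N → Polynomial (Polynomial K₀) :=
    fun i => if h : x i ∈ K₀ then C (C ⟨x i, h⟩) else A₀ i with hAdef
  set B : Fin N → Polynomial (Polynomial K₀) :=
    fun i => if x i ∈ K₀ then 1 else B₀ i with hBdef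
  have hB : ∀ i, e2 K₀ t θ (B i) ≠ 0 := by
    intro i
    by_cases h : x i ∈ K₀ <;> simp [hBdef, h, hB₀ i]
  have hAB : ∀ i, x i * e2 K₀ t θ (B i) = e2 K₀ t θ (A i) := by
    intro i
    by_cases h : x i ∈ K₀
    · simp [hAdef, hBdef, h, e2_CC]
    · simp [hAdef, hBdef, h, hAB₀ i]

  -- minimal polynomial data
  obtain ⟨Mμ, hlc, hdeg, hM0, hdvd⟩ := minpoly_lift K₀ t θ ht hθint
  obtain ⟨gens, hgens0, hgensdet⟩ := kernel_gen F x
  have hq0 : ∀ g ∈ gens, e2 K₀ t θ (clearPoly hFK g A B) = 0 := by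
    intro g hg
    rw [clearPoly_eval hFK g A B t θ hB]
    have hxeq : (fun i => e2 K₀ t θ (A i) / e2 K₀ t θ (B i)) = x := by
      funext i
      rw [eq_comm, eq_div_iff (hB i)]
      exact hAB i
    rw [hxeq, hgens0 g hg, mul_zero]
  have hdiv : ∀ g : {g // g ∈ gens}, ∃ D G, Polynomial.aeval t D ≠ 0 ∧
      C D * clearPoly hFK g.1 A B = Mμ * G :=
    fun g => hdvd _ (hq0 g.1 g.2)
  choose D G hD hDG using hdiv
  -- first eventuality: all nonvanishing/distance conditions near (t, θ)
  have hev1 : ∀ᶠ z : ℂ × ℂ in nhds (t, θ),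
      ((∀ i, e2 K₀ z.1 z.2 (B i) ≠ 0 ∧
        dist (e2 K₀ z.1 z.2 (A i) / e2 K₀ z.1 z.2 (B i)) (x i) < ε) ∧
       Polynomial.aeval z.1 Mμ.leadingCoeff ≠ 0 ∧
       ∀ g : {g // g ∈ gens}, Polynomial.aeval z.1 (D g) ≠ 0) := by
    refine Filter.Eventually.and (Filter.eventually_all.mpr ?_)
      (Filter.Eventually.and ?_ (Filter.eventually_all.mpr ?_))
    · intro i
      have hcB : Continuous fun z : ℂ × ℂ => e2 K₀ z.1 z.2 (B i) := e2_continuous K₀ (B i)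
      have h1 : ∀ᶠ z : ℂ × ℂ in nhds (t, θ), e2 K₀ z.1 z.2 (B i) ≠ 0 :=
        (hcB.continuousAt).eventually_ne (hB i)
      refine h1.and ?_
      have hcA : Continuous fun z : ℂ × ℂ => e2 K₀ z.1 z.2 (A i) := e2_continuous K₀ (A i)
      have hct : ContinuousAt (fun z : ℂ × ℂ => e2 K₀ z.1 z.2 (A i) / e2 K₀ z.1 z.2 (B i)) (t, θ) :=
        (hcA.continuousAt).div (hcB.continuousAt) (hB i)
      have hval : e2 K₀ t θ (A i) / e2 K₀ t θ (B i) = x i := by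
        rw [eq_comm, eq_div_iff (hB i)]; exact hAB i
      have := Metric.tendsto_nhds.mp (hval ▸ hct.tendsto) ε hε
      exact this
    · have hc : Continuous fun z : ℂ × ℂ => Polynomial.aeval z.1 Mμ.leadingCoeff :=
        (Polynomial.continuous_aeval Mμ.leadingCoeff).comp continuous_fst
      exact (hc.continuousAt).eventually_ne hlc
    · intro g
      have hc : Continuous fun z : ℂ × ℂ => Polynomial.aeval z.1 (D g) :=
        (Polynomial.continuous_aeval (D g)).comp continuous_fst
      exact (hc.continuousAt).eventually_ne (hD g)
  obtain ⟨δ, hδpos, hball⟩ := Metric.eventually_nhds_iff.mp hev1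
  -- second eventuality : smallness of the normalized minimal polynomial at θ
  have hev2 : ∀ᶠ s' : ℂ in nhds t,
      ‖e2 K₀ s' θ Mμ / Polynomial.aeval s' Mμ.leadingCoeff‖ < δ ^ Mμ.natDegree := by
    have hc1 : Continuous fun s' : ℂ => e2 K₀ s' θ Mμ :=
      (e2_continuous K₀ Mμ).comp (continuous_id.prodMk continuous_const)
    have hct : ContinuousAt
        (fun s' : ℂ => e2 K₀ s' θ Mμ / Polynomial.aeval s' Mμ.leadingCoeff) t :=
      (hc1.continuousAt).div ((Polynomial.continuous_aeval Mμ.leadingCoeff).continuousAt) hlc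
    have hval : e2 K₀ t θ Mμ / Polynomial.aeval t Mμ.leadingCoeff = 0 := by
      rw [hM0, zero_div]
    have htd := Metric.tendsto_nhds.mp (hval ▸ hct.tendsto) (δ ^ Mμ.natDegree)
      (by positivity)
    refine htd.mono ?_
    intro s' hs'
    rwa [Complex.dist_eq, sub_zero] at hs'
  obtain ⟨δ₂, hδ₂pos, hball₂⟩ := Metric.eventually_nhds_iff.mp hev2
  -- choose s ∈ F close to t
  obtain ⟨s, hsF, hsball⟩ := (dense_subfield F hF).exists_mem_open Metric.isOpen_ball
    (⟨t, Metric.mem_ball_self (lt_min hδpos hδ₂pos)⟩ : (Metric.ball t (min δ δ₂)).Nonempty)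
  have hst : dist s t < δ := lt_of_lt_of_le (Metric.mem_ball.mp hsball) (min_le_left _ _)
  have hst₂ : dist s t < δ₂ := lt_of_lt_of_le (Metric.mem_ball.mp hsball) (min_le_right _ _)
  have hsθ : dist ((s, θ) : ℂ × ℂ) (t, θ) < δ := by
    rw [Prod.dist_eq]
    simp [hst, hδpos]
  have hsθball := hball hsθ
  have hℓ : Polynomial.aeval s Mμ.leadingCoeff ≠ 0 := hsθball.2.1
  -- the specialized minimal polynomial and its root β
  set Ms : Polynomial ℂ :=
    Mμ.map ((Polynomial.aeval s).toRingHom : Polynomial K₀ →+* ℂ) with hMsdef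
  have he2Ms : ∀ b : ℂ, Ms.eval b = e2 K₀ s b Mμ := by
    intro b
    rw [hMsdef, Polynomial.eval_map, e2_apply]
  have hMsdeg : Ms.natDegree = Mμ.natDegree :=
    Polynomial.natDegree_map_of_leadingCoeff_ne_zero _ hℓ
  have hMslc : Ms.leadingCoeff = Polynomial.aeval s Mμ.leadingCoeff := by
    rw [hMsdef, Polynomial.leadingCoeff, hMsdeg, Polynomial.coeff_map]
    rfl
  set u : Polynomial ℂ := Ms * C (Polynomial.aeval s Mμ.leadingCoeff)⁻¹ with hudef
  have hu_monic : u.Monic := by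
    rw [Polynomial.Monic, hudef, Polynomial.leadingCoeff_mul, Polynomial.leadingCoeff_C, hMslc]
    exact mul_inv_cancel₀ hℓ
  have hMs0 : Ms ≠ 0 := by
    intro h0
    rw [h0] at hMslc
    exact hℓ (by rw [← hMslc]; simp)
  have hu_deg : u.natDegree = Mμ.natDegree := by
    rw [hudef, Polynomial.natDegree_mul hMs0 (by simp [inv_ne_zero hℓ]), Polynomial.natDegree_C,
      add_zero, hMsdeg]
  have husmall : ‖u.eval θ‖ < δ ^ u.natDegree := by
    rw [hudef, Polynomial.eval_mul, Polynomial.eval_C, he2Ms, hu_deg, ← div_eq_mul_inv]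
    exact hball₂ hst₂
  obtain ⟨β, hβroot, hβθ⟩ := exists_root_near u hu_monic θ δ hδpos husmall
  have hMμβ : e2 K₀ s β Mμ = 0 := by
    have h0 : Ms.eval β * (Polynomial.aeval s Mμ.leadingCoeff)⁻¹ = 0 := by
      have := hβroot
      rwa [Polynomial.IsRoot, hudef, Polynomial.eval_mul, Polynomial.eval_C] at this
    rcases mul_eq_zero.mp h0 with h | h
    · rw [← he2Ms]; exact h
    · exact absurd h (inv_ne_zero hℓ)
  have hzball : dist ((s, β) : ℂ × ℂ) (t, θ) < δ := by
    rw [Prod.dist_eq]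
    exact max_lt hst hβθ
  obtain ⟨hcond, hℓz, hDz⟩ := hball hzball
  -- definition of y
  set y : Fin N → ℂ := fun i => e2 K₀ s β (A i) / e2 K₀ s β (B i) with hydef
  have hBz : ∀ i, e2 K₀ s β (B i) ≠ 0 := fun i => (hcond i).1
  have hyx : ∀ i, x i ∈ K₀ → y i = x i := by
    intro i h
    rw [hydef]
    simp only [hAdef, hBdef, dif_pos h, if_pos h, map_one, e2_CC]
    simp
  -- y kills all polynomials vanishing at x
  have hgensy : ∀ g ∈ gens, MvPolynomial.aeval y g = 0 := by
    intro g hg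
    have hid := hDG ⟨g, hg⟩
    have := congrArg (e2 K₀ s β) hid
    rw [map_mul, map_mul, hMμβ, zero_mul] at this
    have hq : e2 K₀ s β (clearPoly hFK g A B) = 0 := by
      have hDgz : e2 K₀ s β (C (D ⟨g, hg⟩)) ≠ 0 := by
        rw [e2_C]
        exact hDz ⟨g, hg⟩
      rcases mul_eq_zero.mp this with h | h
      · exact absurd h hDgz
      · exact h
    rw [clearPoly_eval hFK g A B s β hBz] at hq
    rcases mul_eq_zero.mp hq with h | h
    · exfalso
      refine pow_ne_zero _ ?_ h
      rw [Finset.prod_ne_zero_iff]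
      exact fun i _ => hBz i
    · exact h
  -- algebraicity of y over K₀
  have hsK : s ∈ K₀ := hFK hsF
  have hβint : IsIntegral K₀ β := by
    apply isAlgebraic_iff_isIntegral.mp
    set cs : K₀ := ⟨s, hsK⟩ with hcs
    set Ms' : Polynomial K₀ :=
      Mμ.map ((Polynomial.aeval cs).toRingHom : Polynomial K₀ →+* K₀) with hMs'def
    have hcoe : ∀ P : Polynomial K₀, algebraMap K₀ ℂ (Polynomial.aeval cs P) =
        Polynomial.aeval s P := by
      intro P
      have := Polynomial.aeval_algebraMap_apply ℂ cs P
      rw [← this]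
      rfl
    have hring : ((algebraMap K₀ ℂ).comp ((Polynomial.aeval cs).toRingHom : Polynomial K₀ →+* K₀))
        = ((Polynomial.aeval s).toRingHom : Polynomial K₀ →+* ℂ) := RingHom.ext hcoe
    have haev : Polynomial.aeval β Ms' = e2 K₀ s β Mμ := by
      rw [hMs'def, Polynomial.aeval_def, Polynomial.eval₂_map, e2_apply, hring]
    refine ⟨Ms', ?_, by rw [haev]; exact hMμβ⟩
    intro h0
    apply hℓ
    have : Ms'.coeff Mμ.natDegree = Polynomial.aeval cs (Mμ.coeff Mμ.natDegree) := by
      rw [hMs'def, Polynomial.coeff_map]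
      rfl
    rw [h0] at this
    have h2 : (0 : K₀) = Polynomial.aeval cs (Mμ.coeff Mμ.natDegree) := by
      simpa using this
    have h3 := congrArg (algebraMap K₀ ℂ) h2
    rw [hcoe] at h3
    rw [Polynomial.leadingCoeff] at *
    rw [← h3]
    simp
  have halgy : ∀ i, IsAlgebraic K₀ (y i) := by
    intro i
    apply isAlgebraic_iff_isIntegral.mpr
    apply mem_algSub.mp
    have hclos : Subfield.closure ((K₀ : Set ℂ) ∪ {β}) ≤ algSub K₀ := by
      apply Subfield.closure_le.mpr
      rintro w (hw | hw)
      · exact mem_algSub.mpr (isAlgebraic_iff_isIntegral.mp ⟨X - C ⟨w, hw⟩, by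
          intro hX0
          have := congrArg (fun q => Polynomial.coeff q 1) hX0
          simp at this, by
          simp only [map_sub, Polynomial.aeval_X, Polynomial.aeval_C]
          exact sub_eq_zero.mpr rfl⟩)
      · rcases hw with rfl
        exact mem_algSub.mpr hβint
    apply hclos
    rw [hydef]
    exact Subfield.div_mem _ (e2_mem_closure hsK (A i)) (e2_mem_closure hsK (B i))
  exact ⟨y, halgy, hyx, fun p hp => hgensdet y hgensy p hp, fun i => (hcond i).2⟩


lemma isIntegral_self {K : Subfield ℂ} {w : ℂ} (hw : w ∈ K) : IsIntegral K w := by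
  apply isAlgebraic_iff_isIntegral.mp
  refine ⟨X - C ⟨w, hw⟩, ?_, ?_⟩
  · intro hX0
    have := congrArg (fun q => Polynomial.coeff q 1) hX0
    simp at this
  · simp only [map_sub, Polynomial.aeval_X, Polynomial.aeval_C]
    exact sub_eq_zero.mpr rfl

lemma key {N : ℕ} (F : Subfield ℂ) (hF : IsAlgClosed F) :
    ∀ (d : ℕ) (x : Fin N → ℂ) (S : Finset (Fin N)), S.card ≤ d →
      (∀ i, IsAlgebraic (Subfield.closure ((F : Set ℂ) ∪ x '' ↑S)) (x i)) →
      ∀ ε : ℝ, 0 < ε →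
      ∃ y : Fin N → ℂ, (∀ i, y i ∈ F) ∧
        (∀ p : MvPolynomial (Fin N) F, MvPolynomial.aeval x p = 0 → MvPolynomial.aeval y p = 0) ∧
        (∀ i, dist (y i) (x i) < ε) := by
  intro d
  induction d with
  | zero =>
    intro x S hcard halg ε hε
    have hS : S = ∅ := Finset.card_eq_zero.mp (Nat.le_zero.mp hcard)
    subst hS
    have hcl : Subfield.closure ((F : Set ℂ) ∪ x '' ↑(∅ : Finset (Fin N))) = F := by
      simp [Subfield.closure_eq]
    refine ⟨x, ?_, fun p hp => hp, fun i => by simpa using hε⟩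
    intro i
    apply mem_of_isAlgebraic F hF
    exact isAlgebraic_mono (le_of_eq hcl) (halg i)
  | succ d IH =>
    intro x S hcard halg ε hε
    by_cases hle : S.card ≤ d
    · exact IH x S hle halg ε hε
    · have hcardeq : S.card = d + 1 := le_antisymm hcard (not_le.mp hle)
      obtain ⟨k, hk⟩ := Finset.card_pos.mp (by omega : 0 < S.card)
      set S' := S.erase k with hS'
      set K₀ := Subfield.closure ((F : Set ℂ) ∪ x '' ↑S') with hK₀
      set t := x k with htdef
      have hFK : F ≤ K₀ := fun z hz => Subfield.subset_closure (Or.inl hz)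
      have hK₀le : K₀ ≤ Subfield.closure ((F : Set ℂ) ∪ x '' ↑S) := by
        apply Subfield.closure_le.mpr
        rintro v (hv | hv)
        · exact Subfield.subset_closure (Or.inl hv)
        · obtain ⟨j, hj, rfl⟩ := hv
          exact Subfield.subset_closure (Or.inr ⟨j, Finset.mem_of_mem_erase hj, rfl⟩)
      have hKS : Subfield.closure ((F : Set ℂ) ∪ x '' ↑S) =
          Subfield.closure ((K₀ : Set ℂ) ∪ {t}) := by
        apply le_antisymm
        · apply Subfield.closure_le.mpr
          rintro w (hw | hw)
          · exact Subfield.subset_closure (Or.inl (hFK hw))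
          · obtain ⟨j, hj, rfl⟩ := hw
            by_cases hjk : j = k
            · subst hjk
              exact Subfield.subset_closure (Or.inr rfl)
            · have hmem : x j ∈ K₀ :=
                Subfield.subset_closure (Or.inr ⟨j, Finset.mem_erase.mpr ⟨hjk, hj⟩, rfl⟩)
              exact Subfield.subset_closure (Or.inl hmem)
        · apply Subfield.closure_le.mpr
          rintro w (hw | hw)
          · exact hK₀le hw
          · rcases hw with rfl
            exact Subfield.subset_closure (Or.inr ⟨k, hk, rfl⟩)
      have hScard' : S'.card ≤ d := by
        rw [hS', Finset.card_erase_of_mem hk]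
        omega
      by_cases htr : IsAlgebraic K₀ t
      · -- t algebraic over K₀ : drop k from S
        have hint : ∀ w : (Subfield.closure ((F : Set ℂ) ∪ x '' ↑S)), IsIntegral K₀ (w : ℂ) := by
          intro w
          have hw : (w : ℂ) ∈ Subfield.closure ((K₀ : Set ℂ) ∪ {t}) := (le_of_eq hKS) w.2
          have hsub : Subfield.closure ((K₀ : Set ℂ) ∪ {t}) ≤ algSub K₀ := by
            apply Subfield.closure_le.mpr
            rintro v (hv | hv)
            · exact mem_algSub.mpr (isIntegral_self hv)
            · rcases hv with rfl
              exact mem_algSub.mpr (isAlgebraic_iff_isIntegral.mp htr)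
          exact mem_algSub.mp (hsub hw)
        have halg' : ∀ i, IsAlgebraic K₀ (x i) := fun i =>
          isAlgebraic_iff_isIntegral.mpr (isIntegral_of_tower hK₀le hint (halg i))
        exact IH x S' hScard' halg' ε hε
      · -- t transcendental over K₀ : use the specialization step
        have ht' : Transcendental K₀ t := htr
        have hxt : ∀ i, IsAlgebraic (Subfield.closure ((K₀ : Set ℂ) ∪ {t})) (x i) := by
          intro i
          exact isAlgebraic_mono (le_of_eq hKS) (halg i)
        obtain ⟨y, hyalg, hyfix, hyvan, hydist⟩ :=
          spec_step F K₀ hF hFK x t ht' hxt (ε/2) (by positivity)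
        have hyS' : ∀ j ∈ S', y j = x j := fun j hj =>
          hyfix j (Subfield.subset_closure (Or.inr ⟨j, hj, rfl⟩))
        have himg : y '' ↑S' = x '' ↑S' :=
          Set.image_congr (fun j hj => hyS' j hj)
        have halgy : ∀ i, IsAlgebraic (Subfield.closure ((F : Set ℂ) ∪ y '' ↑S')) (y i) := by
          intro i
          rw [himg]
          exact hyalg i
        obtain ⟨z, hzF, hzvan, hzdist⟩ := IH y S' hScard' halgy (ε/2) (by positivity)
        refine ⟨z, hzF, fun p hp => hzvan p (hyvan p hp), fun i => ?_⟩
        calc dist (z i) (x i) ≤ dist (z i) (y i) + dist (y i) (x i) := dist_triangle _ _ _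
          _ < ε/2 + ε/2 := add_lt_add (hzdist i) (hydist i)
          _ = ε := by ring

end DenseAux


/-- Let `F` be an algebraically closed subfield of `ℂ` and let `V ⊆ ℂ^N` be the common
zero set of a family of polynomials with coefficients in `F`. Then the points of `V` with
all coordinates in `F` are dense in `V` for the classical (Euclidean) topology. -/
theorem algebraic_set_points_over_subfield_dense (F : Subfield ℂ) (hF : IsAlgClosed F)
    (N : ℕ) (hN : 0 < N) (P : Set (MvPolynomial (Fin N) F)) :
    {x : Fin N → ℂ | ∀ p ∈ P, MvPolynomial.aeval x p = 0} ⊆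
      closure ({x : Fin N → ℂ | ∀ p ∈ P, MvPolynomial.aeval x p = 0} ∩
        {x : Fin N → ℂ | ∀ i, x i ∈ (F : Set ℂ)}) := by
  intro x hx
  rw [Metric.mem_closure_iff]
  intro ε hε
  have halg : ∀ i, IsAlgebraic
      (Subfield.closure ((F : Set ℂ) ∪ x '' ↑(Finset.univ : Finset (Fin N)))) (x i) := by
    intro i
    apply isAlgebraic_iff_isIntegral.mpr
    apply DenseAux.isIntegral_self
    exact Subfield.subset_closure (Or.inr ⟨i, Finset.mem_univ i, rfl⟩)
  obtain ⟨y, hyF, hyvan, hydist⟩ := DenseAux.key F hF N x (Finset.univ : Finset (Fin N))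
    (le_of_eq (by simp)) halg ε hε
  refine ⟨y, ⟨fun p hp => hyvan p (hx p hp), hyF⟩, ?_⟩
  rw [dist_pi_lt_iff hε]
  intro i
  rw [dist_comm]
  exact hydist i
end
end

section
/- Let A be a discrete subgroup of SL₂(ℂ) which is isomorphic as a group to ℤ × ℤ. Then every element γ ≠ I of A satisfies trace(γ) = 2 or trace(γ) = −2; that is, the image of every nontrivial element of A in PSL₂(ℂ) is parabolic. -/
open scoped MatrixGroups
open Matrix

/-- The topology on `SL(2, ℂ)` induced from the space of `2 × 2` complex matrices. -/
noncomputable instance : TopologicalSpace SL(2, ℂ) :=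
  TopologicalSpace.induced (fun g => (g : Matrix (Fin 2) (Fin 2) ℂ)) inferInstance

lemma diag_aux' (a b c d : ℂ) (hdet : a * d - b * c = 1)
    (h2 : a + d ≠ 2) (h2' : a + d ≠ -2) :
    ∃ (Q : Matrix (Fin 2) (Fin 2) ℂ) (l m : ℂ), IsUnit Q.det ∧ l * m = 1 ∧ l ≠ m ∧
      !![a, b; c, d] * Q = Q * !![l, 0; 0, m] := by
  by_cases hb0 : b = 0
  · have had : a * d = 1 := by rw [hb0] at hdet; linear_combination hdet
    have hane : a ≠ d := by
      intro h
      rcases mul_self_eq_one_iff.mp (h ▸ had) with h1 | h1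
      · exact h2 (by rw [h, h1]; norm_num)
      · exact h2' (by rw [h, h1]; norm_num)
    refine ⟨!![a - d, 0; c, 1], a, d, ?_, had, hane, ?_⟩
    · rw [det_fin_two_of]
      exact isUnit_iff_ne_zero.mpr (by simpa using sub_ne_zero_of_ne hane)
    · rw [hb0, Matrix.mul_fin_two, Matrix.mul_fin_two]
      ext i j
      fin_cases i <;> fin_cases j <;> simp <;> ring
  · obtain ⟨s, hs⟩ := IsAlgClosed.exists_pow_nat_eq ((a + d) ^ 2 - 4) (n := 2)
      (by norm_num)
    have hs0 : s ≠ 0 := by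
      intro h
      rw [h] at hs
      have : ((a + d) - 2) * ((a + d) + 2) = 0 := by linear_combination -hs
      rcases mul_eq_zero.mp this with h1 | h1
      · exact h2 (by linear_combination h1)
      · exact h2' (by linear_combination h1)
    set l := ((a + d) + s) / 2 with hl
    set m := ((a + d) - s) / 2 with hm
    have hlm : l * m = 1 := by
      rw [hl, hm]; field_simp; linear_combination -hs
    have hlne : l ≠ m := by
      rw [hl, hm]
      intro h
      field_simp at h
      exact hs0 (by linear_combination h / 2)
    refine ⟨!![b, b; l - a, m - a], l, m, ?_, hlm, hlne, ?_⟩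
    · rw [det_fin_two_of]
      refine isUnit_iff_ne_zero.mpr ?_
      have : b * (m - a) - b * (l - a) = b * (m - l) := by ring
      rw [this]
      exact mul_ne_zero hb0 (sub_ne_zero_of_ne (Ne.symm hlne))
    · rw [Matrix.mul_fin_two, Matrix.mul_fin_two, hl, hm]
      ext i j
      fin_cases i <;> fin_cases j <;> simp <;> field_simp <;>
        first
        | linear_combination (-2:ℂ)*hs - 8*hdet
        | linear_combination (-1:ℂ)*hs - 4*hdet
        | ring

lemma comm_diag (l m : ℂ) (hlne : l ≠ m) (M : Matrix (Fin 2) (Fin 2) ℂ)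
    (h : M * !![l, 0; 0, m] = !![l, 0; 0, m] * M) :
    M 0 1 = 0 ∧ M 1 0 = 0 := by
  have h01 : M 0 1 * m = l * M 0 1 := by
    have := congrFun (congrFun h 0) 1
    simpa [Matrix.mul_apply, Fin.sum_univ_two] using this
  have h10 : M 1 0 * l = m * M 1 0 := by
    have := congrFun (congrFun h 1) 0
    simpa [Matrix.mul_apply, Fin.sum_univ_two] using this
  have hlm := sub_ne_zero_of_ne hlne
  constructor
  · have : (l - m) * M 0 1 = 0 := by linear_combination -h01
    rcases mul_eq_zero.mp this with h | h
    · exact absurd h hlm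
    · exact h
  · have : (l - m) * M 1 0 = 0 := by linear_combination h10
    rcases mul_eq_zero.mp this with h | h
    · exact absurd h hlm
    · exact h

lemma seq_lemma (a b : ℝ) : ∃ p : ℕ → ℤ × ℤ, Function.Injective p ∧
    ∀ n : ℕ, |((p n).1 : ℝ) * a + ((p n).2 : ℝ) * b| ≤ |b| := by
  by_cases hb : b = 0
  · refine ⟨fun n => (0, n), ?_, ?_⟩
    · intro x y h
      simpa using congrArg Prod.snd h
    · intro n
      simp [hb]
  · refine ⟨fun n => ((n : ℤ), -round ((n : ℝ) * a / b)), ?_, ?_⟩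
    · intro x y h
      simpa using congrArg Prod.fst h
    · intro n
      have key : ((n : ℤ) : ℝ) * a + ((-round ((n : ℝ) * a / b) : ℤ) : ℝ) * b
          = b * ((n : ℝ) * a / b - round ((n : ℝ) * a / b)) := by
        push_cast
        field_simp
        ring
      rw [key, abs_mul]
      calc |b| * |(n : ℝ) * a / b - round ((n : ℝ) * a / b)| ≤ |b| * (1/2) := by
            exact mul_le_mul_of_nonneg_left (abs_sub_round _) (abs_nonneg b)
        _ ≤ |b| := by nlinarith [abs_nonneg b]

lemma no_bounded_seq (A : Subgroup SL(2, ℂ)) (hdisc : DiscreteTopology A)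
    (R : Fin 2 → Fin 2 → ℝ) (δseq : ℕ → ↥A) (hinj : Function.Injective δseq)
    (hb : ∀ (n : ℕ) (i j : Fin 2),
      ‖((δseq n : SL(2, ℂ)) : Matrix (Fin 2) (Fin 2) ℂ) i j‖ ≤ R i j) :
    False := by
  haveI : FirstCountableTopology (Matrix (Fin 2) (Fin 2) ℂ) :=
    inferInstanceAs (FirstCountableTopology (Fin 2 → Fin 2 → ℂ))
  set x : ℕ → Matrix (Fin 2) (Fin 2) ℂ :=
    fun n => ((δseq n : SL(2, ℂ)) : Matrix (Fin 2) (Fin 2) ℂ) with hx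
  set K : Set (Matrix (Fin 2) (Fin 2) ℂ) :=
    Set.univ.pi (fun i : Fin 2 => Set.univ.pi fun j : Fin 2 => Metric.closedBall (0 : ℂ) (R i j))
    with hK
  have hKc : IsCompact K := by
    refine isCompact_univ_pi fun i => ?_
    exact isCompact_univ_pi fun j => isCompact_closedBall _ _
  have hmem : ∀ n, x n ∈ K := by
    intro n
    refine Set.mem_univ_pi.mpr fun i => Set.mem_univ_pi.mpr fun j => ?_
    rw [Metric.mem_closedBall, dist_zero_right]
    exact hb n i j
  obtain ⟨p0, hp0K, φ, hφ, hlim⟩ := hKc.tendsto_subseq hmem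
  have hdet1 : ∀ n, (x n).det = 1 := fun n => ((δseq n : SL(2, ℂ))).2
  have hdet0 : p0.det = 1 := by
    have hcont : Filter.Tendsto (fun k => (x (φ k)).det) Filter.atTop (nhds p0.det) :=
      ((Continuous.matrix_det continuous_id).tendsto p0).comp hlim
    have : Filter.Tendsto (fun k => (x (φ k)).det) Filter.atTop (nhds 1) := by
      simp [hdet1]
    exact tendsto_nhds_unique hcont this
  set bk : ℕ → ↥A := fun k => δseq (φ (k + 1)) * (δseq (φ k))⁻¹ with hbk
  have hbk1 : ∀ k, bk k ≠ 1 := by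
    intro k h
    have : δseq (φ (k + 1)) = δseq (φ k) := by
      rwa [hbk, mul_inv_eq_one] at h
    have := hinj this
    exact absurd this (Nat.ne_of_gt (hφ (Nat.lt_succ_self k)))
  have hbcoe : ∀ k, ((bk k : SL(2, ℂ)) : Matrix (Fin 2) (Fin 2) ℂ)
      = x (φ (k + 1)) * (x (φ k)).adjugate := by
    intro k
    rw [hbk]
    simp only [Subgroup.coe_mul, InvMemClass.coe_inv, Matrix.SpecialLinearGroup.coe_mul,
      Matrix.SpecialLinearGroup.coe_inv, hx]
  have hmullim : Filter.Tendsto (fun k => ((bk k : SL(2, ℂ)) : Matrix (Fin 2) (Fin 2) ℂ))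
      Filter.atTop (nhds 1) := by
    have hc : Continuous fun q : Matrix (Fin 2) (Fin 2) ℂ × Matrix (Fin 2) (Fin 2) ℂ =>
        q.1 * q.2.adjugate := continuous_fst.matrix_mul continuous_snd.matrix_adjugate
    have h1 : Filter.Tendsto (fun k => x (φ (k + 1))) Filter.atTop (nhds p0) :=
      hlim.comp (Filter.tendsto_add_atTop_nat 1)
    have h2 : Filter.Tendsto (fun k => (x (φ (k + 1)), x (φ k))) Filter.atTop
        (nhds (p0, p0)) := h1.prodMk_nhds hlim
    have h3 := (hc.tendsto (p0, p0)).comp h2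
    have : p0 * p0.adjugate = 1 := by rw [Matrix.mul_adjugate, hdet0, one_smul]
    rw [this] at h3
    simpa [hbcoe, Function.comp_def] using h3
  have hASL : Filter.Tendsto (fun k => (bk k : SL(2, ℂ))) Filter.atTop (nhds 1) := by
    rw [nhds_induced (fun g : SL(2, ℂ) => (g : Matrix (Fin 2) (Fin 2) ℂ)) 1,
      Filter.tendsto_comap_iff]
    simpa [Function.comp_def] using hmullim
  have hAA : Filter.Tendsto bk Filter.atTop (nhds (1 : ↥A)) := by
    rw [nhds_subtype, Filter.tendsto_comap_iff]
    simpa [Function.comp_def] using hASL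
  rw [nhds_discrete, Filter.tendsto_pure] at hAA
  obtain ⟨k, hk⟩ := hAA.exists
  exact hbk1 k hk

/-- A discrete subgroup of `SL(2, ℂ)` isomorphic to `ℤ × ℤ` consists, apart from the
identity, of matrices of trace `±2`, i.e. its nontrivial elements are parabolic in
`PSL(2, ℂ)`. -/
theorem discrete_rank_two_abelian_is_parabolic (A : Subgroup SL(2, ℂ))
    (hdisc : DiscreteTopology A) (hiso : Nonempty (A ≃* Multiplicative (ℤ × ℤ))) :
    ∀ γ : SL(2, ℂ), γ ∈ A → γ ≠ 1 →
      Matrix.trace ((γ : Matrix (Fin 2) (Fin 2) ℂ)) = 2 ∨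
      Matrix.trace ((γ : Matrix (Fin 2) (Fin 2) ℂ)) = -2 := by
  intro γ hγA hγ1
  by_contra hcon
  push_neg at hcon
  obtain ⟨e⟩ := hiso
  set G : Matrix (Fin 2) (Fin 2) ℂ := (γ : Matrix (Fin 2) (Fin 2) ℂ) with hG
  have hdetG : G 0 0 * G 1 1 - G 0 1 * G 1 0 = 1 := by
    have h := γ.2
    rwa [Matrix.det_fin_two] at h
  have htr2 : G 0 0 + G 1 1 ≠ 2 := by
    intro h
    exact hcon.1 (by rw [Matrix.trace_fin_two]; exact h)
  have htr2' : G 0 0 + G 1 1 ≠ -2 := by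
    intro h
    exact hcon.2 (by rw [Matrix.trace_fin_two]; exact h)
  obtain ⟨Q, l, m, hQ, hlm, hlne, hGQ⟩ := diag_aux' (G 0 0) (G 0 1) (G 1 0) (G 1 1)
    hdetG htr2 htr2'
  rw [← Matrix.eta_fin_two G] at hGQ
  have hQl : Q⁻¹ * Q = 1 := Matrix.nonsing_inv_mul Q hQ
  have hQr : Q * Q⁻¹ = 1 := Matrix.mul_nonsing_inv Q hQ
  have hcanc : ∀ X : Matrix (Fin 2) (Fin 2) ℂ, Q * (Q⁻¹ * X) = X := fun X => by
    rw [← Matrix.mul_assoc, hQr, Matrix.one_mul]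
  have hcanc' : ∀ X : Matrix (Fin 2) (Fin 2) ℂ, Q⁻¹ * (Q * X) = X := fun X => by
    rw [← Matrix.mul_assoc, hQl, Matrix.one_mul]
  set D : Matrix (Fin 2) (Fin 2) ℂ := !![l, 0; 0, m] with hD
  have hDQ : Q⁻¹ * G * Q = D := by
    rw [Matrix.mul_assoc, hGQ, ← Matrix.mul_assoc, hQl, Matrix.one_mul]
  -- the conjugated elements
  set ι : ↥A → Matrix (Fin 2) (Fin 2) ℂ :=
    fun δ => ((δ : SL(2, ℂ)) : Matrix (Fin 2) (Fin 2) ℂ) with hι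
  set N : ↥A → Matrix (Fin 2) (Fin 2) ℂ := fun δ => Q⁻¹ * ι δ * Q with hN
  have hιmul : ∀ x y : ↥A, ι (x * y) = ι x * ι y := fun x y => by
    simp only [hι, Subgroup.coe_mul, Matrix.SpecialLinearGroup.coe_mul]
  have hcommA : ∀ x y : ↥A, x * y = y * x := fun x y =>
    e.injective (by rw [_root_.map_mul, _root_.map_mul, mul_comm])
  set γA : ↥A := ⟨γ, hγA⟩ with hγAdef
  have hγG : ι γA = G := rfl
  have hcommG : ∀ δ : ↥A, ι δ * G = G * ι δ := by
    intro δ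
    have h := hcommA δ γA
    have h2 := congrArg ι h
    rwa [hιmul, hιmul, hγG] at h2
  have hNmul : ∀ δ ε : ↥A, N (δ * ε) = N δ * N ε := by
    intro δ ε
    rw [hN]
    simp only
    rw [hιmul]
    simp only [Matrix.mul_assoc]
    rw [hcanc]
  have hNcomm : ∀ δ : ↥A, N δ * D = D * N δ := by
    intro δ
    rw [← hDQ, hN]
    simp only
    simp only [Matrix.mul_assoc]
    rw [hcanc, hcanc, ← Matrix.mul_assoc (ι δ) G Q, hcommG, Matrix.mul_assoc]
  have hdiag : ∀ δ : ↥A, N δ 0 1 = 0 ∧ N δ 1 0 = 0 := fun δ =>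
    comm_diag l m hlne (N δ) (hNcomm δ)
  have hNdet : ∀ δ : ↥A, (N δ).det = 1 := by
    intro δ
    rw [hN]
    simp only
    rw [Matrix.det_mul, Matrix.det_mul]
    have h1 : (ι δ).det = 1 := (δ : SL(2, ℂ)).2
    rw [h1, mul_one, ← Matrix.det_mul, hQl, Matrix.det_one]
  have hprod1 : ∀ δ : ↥A, N δ 0 0 * N δ 1 1 = 1 := by
    intro δ
    have h := hNdet δ
    rw [Matrix.det_fin_two, (hdiag δ).1] at h
    linear_combination h
  have hχmul : ∀ δ ε : ↥A, N (δ * ε) 0 0 = N δ 0 0 * N ε 0 0 := by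
    intro δ ε
    rw [hNmul, Matrix.mul_apply, Fin.sum_univ_two, (hdiag δ).1]
    ring
  -- the logarithm of the modulus of the eigenvalue
  set L : ↥A → ℝ := fun δ => Real.log (‖N δ 0 0‖) with hL
  have hχne : ∀ δ : ↥A, N δ 0 0 ≠ 0 := fun δ => left_ne_zero_of_mul_eq_one (hprod1 δ)
  have habs_pos : ∀ δ : ↥A, 0 < ‖N δ 0 0‖ := by
    intro δ
    simpa [AbsoluteValue.pos_iff] using (norm_pos_iff.mpr (hχne δ))
  have hLmul : ∀ δ ε : ↥A, L (δ * ε) = L δ + L ε := by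
    intro δ ε
    rw [hL]
    simp only
    rw [hχmul, norm_mul, Real.log_mul (ne_of_gt (habs_pos δ)) (ne_of_gt (habs_pos ε))]
  -- transfer to ℤ × ℤ
  set u : ℤ × ℤ → ↥A := fun q => e.symm (Multiplicative.ofAdd q) with hu
  have huadd : ∀ q r : ℤ × ℤ, u (q + r) = u q * u r := by
    intro q r
    rw [hu]
    simp only
    rw [← _root_.map_mul]
    rfl
  have huinj : Function.Injective u := fun q r h => by
    have := congrArg e h
    rw [hu] at this
    simp only [MulEquiv.apply_symm_apply] at this
    exact Multiplicative.ofAdd.injective this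
  set F : ℤ × ℤ →+ ℝ := AddMonoidHom.mk' (fun q => L (u q))
    (fun q r => by show L (u (q + r)) = L (u q) + L (u r); rw [huadd, hLmul]) with hF
  have hFval : ∀ q : ℤ × ℤ, F q = (q.1 : ℝ) * F (1, 0) + (q.2 : ℝ) * F (0, 1) := by
    intro q
    have hq : q = q.1 • ((1, 0) : ℤ × ℤ) + q.2 • ((0, 1) : ℤ × ℤ) := by
      ext <;> simp
    rw [hq, map_add, map_zsmul, map_zsmul, zsmul_eq_mul, zsmul_eq_mul]
    simp
  obtain ⟨p, hpinj, hpb⟩ := seq_lemma (F (1, 0)) (F (0, 1))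
  set δseq : ℕ → ↥A := fun n => u (p n) with hδseq
  have hδinj : Function.Injective δseq := fun x y h => hpinj (huinj h)
  -- bound on |L (δseq n)|
  have hLbound : ∀ n, |L (δseq n)| ≤ |F (0, 1)| := by
    intro n
    have : L (δseq n) = F (p n) := rfl
    rw [this, hFval]
    exact hpb n
  set c : ℝ := |F (0, 1)| with hc
  have hxb : ∀ n, ‖N (δseq n) 0 0‖ ≤ Real.exp c := by
    intro n
    have h1 : ‖N (δseq n) 0 0‖ = Real.exp (L (δseq n)) := by
      rw [hL]
      simp only
      rw [Real.exp_log (habs_pos _)]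
    rw [h1]
    exact Real.exp_le_exp.mpr (le_of_abs_le (hLbound n))
  have hyb : ∀ n, ‖N (δseq n) 1 1‖ ≤ Real.exp c := by
    intro n
    have h0 : ‖N (δseq n) 0 0‖ * ‖N (δseq n) 1 1‖ = 1 := by
      rw [← norm_mul, hprod1]
      simp
    have hxne : ‖N (δseq n) 0 0‖ ≠ 0 := ne_of_gt (habs_pos _)
    have h1 : ‖N (δseq n) 1 1‖ = (‖N (δseq n) 0 0‖)⁻¹ := by
      field_simp
      linear_combination h0
    have h2 : ‖N (δseq n) 0 0‖ = Real.exp (L (δseq n)) := by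
      rw [hL]; simp only
      rw [Real.exp_log (habs_pos _)]
    rw [h1, h2, ← Real.exp_neg]
    exact Real.exp_le_exp.mpr ((neg_le_abs _).trans (hLbound n))
  -- recover the matrix of δ from its diagonalization
  set A1 : Matrix (Fin 2) (Fin 2) ℂ := Q * !![(1:ℂ), 0; 0, 0] * Q⁻¹ with hA1
  set A2 : Matrix (Fin 2) (Fin 2) ℂ := Q * !![(0:ℂ), 0; 0, 1] * Q⁻¹ with hA2
  have hrec : ∀ δ : ↥A, ι δ = N δ 0 0 • A1 + N δ 1 1 • A2 := by
    intro δ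
    have hNd : N δ = N δ 0 0 • !![(1:ℂ), 0; 0, 0] + N δ 1 1 • !![(0:ℂ), 0; 0, 1] := by
      ext i j
      fin_cases i <;> fin_cases j <;>
        simp [(hdiag δ).1, (hdiag δ).2]
    have hQNQ : Q * N δ * Q⁻¹ = ι δ := by
      rw [hN]
      simp only
      simp only [Matrix.mul_assoc]
      rw [hQr, Matrix.mul_one, hcanc]
    obtain ⟨x, y, hx, hy⟩ : ∃ x y, N δ 0 0 = x ∧ N δ 1 1 = y := ⟨_, _, rfl, rfl⟩
    rw [hx, hy] at hNd ⊢
    rw [← hQNQ, hNd, Matrix.mul_add, Matrix.add_mul, Matrix.mul_smul, Matrix.smul_mul,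
      Matrix.mul_smul, Matrix.smul_mul, hA1, hA2]
  -- entrywise bound
  set R : Fin 2 → Fin 2 → ℝ :=
    fun i j => Real.exp c * (‖A1 i j‖ + ‖A2 i j‖) with hR
  have hbound : ∀ (n : ℕ) (i j : Fin 2), ‖ι (δseq n) i j‖ ≤ R i j := by
    intro n i j
    rw [hrec (δseq n)]
    have : (N (δseq n) 0 0 • A1 + N (δseq n) 1 1 • A2) i j
        = N (δseq n) 0 0 * A1 i j + N (δseq n) 1 1 * A2 i j := by
      simp [Matrix.add_apply, Matrix.smul_apply, smul_eq_mul]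
    rw [this]
    calc ‖N (δseq n) 0 0 * A1 i j + N (δseq n) 1 1 * A2 i j‖
        ≤ ‖N (δseq n) 0 0 * A1 i j‖ + ‖N (δseq n) 1 1 * A2 i j‖ :=
          norm_add_le _ _
      _ = ‖N (δseq n) 0 0‖ * ‖A1 i j‖
          + ‖N (δseq n) 1 1‖ * ‖A2 i j‖ := by
          rw [norm_mul, norm_mul]
      _ ≤ Real.exp c * ‖A1 i j‖ + Real.exp c * ‖A2 i j‖ := by
          have := hxb n
          have := hyb n
          gcongr
      _ = R i j := by rw [hR]; ring
  exact no_bounded_seq A hdisc R δseq hδinj hbound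
end
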